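/- arXiv:2012.01238 — 5 statements merged into one kernel-verified Lean document; each statement's English description precedes it below -/
import Mathlib

section
/- Let α, β > 0 and δ ∈ ℝ. Then ∫₀^∞ (α/β)·[1+(1-δx)²]·(x/β)^{α-1}·exp(-(x/β)^α) dx = 2 + δ²β²Γ(1+2/α) - 2δβΓ(1+1/α). Consequently, the function f(x) = (α/(β Z))·[1+(1-δx)²]·(x/β)^{α-1}·exp(-(x/β)^α) with Z = 2 + δ²β²Γ(1+2/α) - 2δβΓ(1+1/α) is a probability density on [0,∞). -/
/-!
With `w` the Weibull(α, β) density, the weight `1 + (1 - δx)²` is a quadratic polynomial, so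
the integral is a combination of the moments `∫ xᵏ w = βᵏ Γ(1 + k/α)`, each of which is a Gamma
integral after the substitution `x = β y`. The normalising constant is at least `1`, being `∫ w + ∫ (1 - δx)² w`
with `∫ w = 1`.
-/

open Real MeasureTheory Set Filter

noncomputable def bwPdf (α β δ : ℝ) (x : ℝ) : ℝ :=
  (α / (β * (2 + δ^2*β^2*Real.Gamma (1+2/α) - 2*δ*β*Real.Gamma (1+1/α)))) *
    (1+(1-δ*x)^2) * (x/β)^(α-1) * Real.exp (-(x/β)^α)

noncomputable def weibullDensity (α β x : ℝ) : ℝ :=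
  α / β * (x / β) ^ (α - 1) * exp (-(x / β) ^ α)

section Weibull

variable {α β : ℝ}

lemma weibullDensity_nonneg (hα : 0 < α) (hβ : 0 < β) {x : ℝ} (hx : 0 ≤ x) :
    0 ≤ weibullDensity α β x := by
  unfold weibullDensity
  positivity

lemma integral_rpow_mul_weibullDensity (hα : 0 < α) (hβ : 0 < β) {q : ℝ} (hq : -α < q) :
    ∫ x in Ioi 0, x ^ q * weibullDensity α β x = β ^ q * Gamma (1 + q / α) :=
  calc ∫ x in Ioi 0, x ^ q * weibullDensity α β x
      = β * ∫ y in Ioi 0, (β * y) ^ q * weibullDensity α β (β * y) := by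
        rw [integral_comp_mul_left_Ioi (fun x ↦ x ^ q * weibullDensity α β x) 0 hβ, mul_zero,
          smul_eq_mul, mul_inv_cancel_left₀ hβ.ne']
    _ = β ^ q * α * ∫ y in Ioi 0, y ^ (q + α - 1) * exp (-y ^ α) := by
        rw [← integral_const_mul, ← integral_const_mul]
        refine setIntegral_congr_fun measurableSet_Ioi fun y (hy : 0 < y) ↦ ?_
        rw [weibullDensity, mul_div_cancel_left₀ y hβ.ne', mul_rpow hβ.le hy.le,
          add_sub_assoc, rpow_add hy]
        field_simp
    _ = β ^ q * Gamma (1 + q / α) := by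
        rw [integral_rpow_mul_exp_neg_rpow hα (by linarith), sub_add_cancel,
          add_div, div_self hα.ne', add_comm (q / α)]
        field_simp

lemma integrableOn_rpow_mul_weibullDensity (hα : 0 < α) (hβ : 0 < β) {q : ℝ} (hq : -α < q) :
    IntegrableOn (fun x ↦ x ^ q * weibullDensity α β x) (Ioi 0) := by
  refine .of_integral_ne_zero ?_
  have hΓ : 0 < Gamma (1 + q / α) := by
    rw [one_add_div hα.ne']
    exact Gamma_pos_of_pos (div_pos (by linarith) hα)
  rw [integral_rpow_mul_weibullDensity hα hβ hq]
  exact (mul_pos (rpow_pos_of_pos hβ q) hΓ).ne'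

lemma integral_quadratic_mul_weibullDensity (hα : 0 < α) (hβ : 0 < β) (a b c : ℝ) :
    ∫ x in Ioi 0, (a + b * x + c * x ^ 2) * weibullDensity α β x
      = a + b * β * Gamma (1 + 1 / α) + c * β ^ 2 * Gamma (1 + 2 / α) := by
  have moment (k : ℕ) :
      ∫ x in Ioi 0, x ^ k * weibullDensity α β x = β ^ k * Gamma (1 + k / α) := by
    simpa only [rpow_natCast] using
      integral_rpow_mul_weibullDensity hα hβ (q := k) (by linarith [k.cast_nonneg (α := ℝ)])
  have integrable (k : ℕ) : IntegrableOn (fun x ↦ x ^ k * weibullDensity α β x) (Ioi 0) := by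
    simpa only [rpow_natCast] using
      integrableOn_rpow_mul_weibullDensity hα hβ (q := k) (by linarith [k.cast_nonneg (α := ℝ)])
  calc ∫ x in Ioi 0, (a + b * x + c * x ^ 2) * weibullDensity α β x
      = ∫ x in Ioi 0, a * (x ^ 0 * weibullDensity α β x) + b * (x ^ 1 * weibullDensity α β x)
          + c * (x ^ 2 * weibullDensity α β x) := by
        congr 1 with x
        ring
    _ = a + b * β * Gamma (1 + 1 / α) + c * β ^ 2 * Gamma (1 + 2 / α) := by
      rw [integral_add ?_ ((integrable 2).const_mul c),
        integral_add ((integrable 0).const_mul a) ((integrable 1).const_mul b),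
        integral_const_mul, integral_const_mul, integral_const_mul, moment, moment, moment]
      · norm_num [Gamma_one, mul_assoc]
      · exact ((integrable 0).const_mul a).add ((integrable 1).const_mul b)

lemma integral_one_add_sq_mul_weibullDensity (hα : 0 < α) (hβ : 0 < β) (δ : ℝ) :
    ∫ x in Ioi 0, (1 + (1 - δ * x) ^ 2) * weibullDensity α β x
      = 2 + δ^2*β^2*Gamma (1+2/α) - 2*δ*β*Gamma (1+1/α) :=
  calc ∫ x in Ioi 0, (1 + (1 - δ * x) ^ 2) * weibullDensity α β x
      = ∫ x in Ioi 0, (2 + -2 * δ * x + δ ^ 2 * x ^ 2) * weibullDensity α β x := by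
        congr 1 with x
        ring
    _ = 2 + δ^2*β^2*Gamma (1+2/α) - 2*δ*β*Gamma (1+1/α) := by
        rw [integral_quadratic_mul_weibullDensity hα hβ]
        ring

lemma integral_one_sub_mul_sq_mul_weibullDensity (hα : 0 < α) (hβ : 0 < β) (δ : ℝ) :
    ∫ x in Ioi 0, (1 - δ * x) ^ 2 * weibullDensity α β x
      = 1 + -2 * δ * β * Gamma (1 + 1 / α) + δ ^ 2 * β ^ 2 * Gamma (1 + 2 / α) := by
  rw [← integral_quadratic_mul_weibullDensity hα hβ]
  congr 1 with x
  ring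

end Weibull

lemma bwPdf_eq_div (α β δ x : ℝ) :
    bwPdf α β δ x = (1 + (1 - δ * x) ^ 2) * weibullDensity α β x
      / (2 + δ^2*β^2*Gamma (1+2/α) - 2*δ*β*Gamma (1+1/α)) := by
  rw [bwPdf, weibullDensity, mul_comm β, ← div_div]
  ring

theorem stmt_0 (α β δ : ℝ) (hα : 0 < α) (hβ : 0 < β) :
    (∫ x in Set.Ioi (0:ℝ),
        (α/β) * (1+(1-δ*x)^2) * (x/β)^(α-1) * Real.exp (-(x/β)^α))
      = 2 + δ^2*β^2*Real.Gamma (1+2/α) - 2*δ*β*Real.Gamma (1+1/α) ∧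
    (∀ x ∈ Set.Ici (0:ℝ), 0 ≤ bwPdf α β δ x) ∧
    (∫ x in Set.Ioi (0:ℝ), bwPdf α β δ x) = 1 := by
  have hZ := integral_one_add_sq_mul_weibullDensity hα hβ δ
  set Z := 2 + δ^2*β^2*Real.Gamma (1+2/α) - 2*δ*β*Real.Gamma (1+1/α)
  have hZ_pos : 0 < Z := by
    have hsq_nonneg : 0 ≤ ∫ x in Ioi 0, (1 - δ * x) ^ 2 * weibullDensity α β x :=
      setIntegral_nonneg measurableSet_Ioi fun x (hx : 0 < x) ↦
        mul_nonneg (sq_nonneg _) (weibullDensity_nonneg hα hβ hx.le)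
    rw [integral_one_sub_mul_sq_mul_weibullDensity hα hβ] at hsq_nonneg
    linarith
  refine ⟨?_, fun x (hx : 0 ≤ x) ↦ ?_, ?_⟩
  · rw [← hZ]
    congr 1 with x
    rw [weibullDensity]
    ring
  · rw [bwPdf_eq_div]
    exact div_nonneg (mul_nonneg (by positivity) (weibullDensity_nonneg hα hβ hx)) hZ_pos.le
  · simp_rw [bwPdf_eq_div]
    rw [integral_div, hZ, div_self hZ_pos.ne']
end

section
/- Let X have the bimodal Weibull density f(x) = (α/(βZ))[1+(1-δx)²](x/β)^{α-1}exp(-(x/β)^α) on [0,∞), where Z = 2 + δ²β²Γ(1+2/α) - 2δβΓ(1+1/α). Then for every r > -α, E[X^r] = β^r · [2Γ(1+r/α) + δ²β²Γ(1+(r+2)/α) - 2δβΓ(1+(r+1)/α)] / [2 + δ²β²Γ(1+2/α) - 2δβΓ(1+1/α)]. -/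
/-!
Up to the normalising constant `Z`, the density is `(2 - 2δx + δ²x²)` times the Weibull
density, so the `r`-th moment is a combination of the Weibull moments of orders `r`, `r + 1`,
`r + 2`. The Weibull moment of order `s > -α` is `β ^ s * Γ(1 + s / α)`: after expanding
`(x / β) ^ α` it is an instance of
`∫ x ^ q * exp (-b * x ^ p) = b ^ (-(q + 1) / p) * Γ((q + 1) / p) / p`.
-/

open Real MeasureTheory Set Filter

noncomputable def weibullPdf (α β x : ℝ) : ℝ :=
  α / β * (x / β) ^ (α - 1) * exp (-(x / β) ^ α)

noncomputable def bwNormalizer (α β δ : ℝ) : ℝ :=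
  2 + δ^2*β^2*Gamma (1+2/α) - 2*δ*β*Gamma (1+1/α)

section Weibull

variable {α β : ℝ}

lemma rpow_mul_weibullPdf_eq (hβ : 0 < β) (s : ℝ) {x : ℝ} (hx : 0 < x) :
    x ^ s * weibullPdf α β x =
      α * β ^ (-α) * (x ^ (s + α - 1) * exp (-β ^ (-α) * x ^ α)) := by
  rw [weibullPdf, div_rpow hx.le hβ.le, div_rpow hx.le hβ.le, rpow_sub hβ, rpow_one,
    show s + α - 1 = s + (α - 1) by ring, rpow_add hx, rpow_neg hβ.le]
  field_simp

lemma integrableOn_rpow_mul_weibullPdf (hα : 0 < α) (hβ : 0 < β) {s : ℝ} (hs : -α < s) :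
    IntegrableOn (fun x => x ^ s * weibullPdf α β x) (Ioi 0) := by
  refine IntegrableOn.congr_fun ((integrableOn_rpow_mul_exp_neg_mul_rpow (s := s + α - 1)
    (by linarith) hα (rpow_pos_of_pos hβ (-α))).const_mul (α * β ^ (-α)))
    (fun x hx => (rpow_mul_weibullPdf_eq hβ s hx).symm) measurableSet_Ioi

lemma integral_rpow_mul_weibullPdf (hα : 0 < α) (hβ : 0 < β) {s : ℝ} (hs : -α < s) :
    ∫ x in Ioi 0, x ^ s * weibullPdf α β x = β ^ s * Gamma (1 + s / α) := by
  have hexp : -α * (-(s + α - 1 + 1) / α) = α + s := by field_simp; ring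
  have harg : (s + α - 1 + 1) / α = 1 + s / α := by field_simp; ring
  rw [setIntegral_congr_fun measurableSet_Ioi (fun x hx => rpow_mul_weibullPdf_eq hβ s hx),
    integral_const_mul,
    integral_rpow_mul_exp_neg_mul_rpow hα (by linarith) (rpow_pos_of_pos hβ _),
    ← rpow_mul hβ.le, hexp, harg, rpow_add hβ, rpow_neg hβ.le]
  field_simp

end Weibull

lemma bwPdf_eq (α β δ x : ℝ) :
    bwPdf α β δ x = (1 + (1 - δ * x) ^ 2) * weibullPdf α β x / bwNormalizer α β δ := by
  rw [bwPdf, weibullPdf, bwNormalizer, div_mul_eq_div_div]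
  ring

lemma rpow_mul_bwPdf_eq (α β δ r : ℝ) {x : ℝ} (hx : 0 < x) :
    x ^ r * bwPdf α β δ x =
      (2 * (x ^ r * weibullPdf α β x) - 2 * δ * (x ^ (r + 1) * weibullPdf α β x)
        + δ ^ 2 * (x ^ (r + 2) * weibullPdf α β x)) / bwNormalizer α β δ := by
  rw [bwPdf_eq, rpow_add hx, rpow_add hx, rpow_one, rpow_two]
  ring

theorem stmt_3 (α β δ : ℝ) (hα : 0 < α) (hβ : 0 < β) (r : ℝ) (hr : -α < r) :
    (∫ x in Set.Ioi (0:ℝ), x^r * bwPdf α β δ x)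
      = β^r * (2*Real.Gamma (1+r/α) + δ^2*β^2*Real.Gamma (1+(r+2)/α)
          - 2*δ*β*Real.Gamma (1+(r+1)/α))
        / (2 + δ^2*β^2*Real.Gamma (1+2/α) - 2*δ*β*Real.Gamma (1+1/α)) := by
  have hintegrable : ∀ (c : ℝ) {s : ℝ}, -α < s →
      Integrable (fun x => c * (x ^ s * weibullPdf α β x)) (volume.restrict (Ioi 0)) :=
    fun c _ hs => (integrableOn_rpow_mul_weibullPdf hα hβ hs).const_mul c
  have hr1 : -α < r + 1 := by linarith
  have hr2 : -α < r + 2 := by linarith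
  rw [setIntegral_congr_fun measurableSet_Ioi (fun x hx => rpow_mul_bwPdf_eq α β δ r hx),
    integral_div, integral_add ((hintegrable _ hr).sub' (hintegrable _ hr1)) (hintegrable _ hr2),
    integral_sub (hintegrable _ hr) (hintegrable _ hr1), integral_const_mul, integral_const_mul,
    integral_const_mul, integral_rpow_mul_weibullPdf hα hβ hr,
    integral_rpow_mul_weibullPdf hα hβ hr1, integral_rpow_mul_weibullPdf hα hβ hr2,
    rpow_add hβ, rpow_add hβ, rpow_one, rpow_two, bwNormalizer]
  ring
end

section
/- Let X have the bimodal Weibull density f(x;θ) with parameters α, β > 0 and δ ∈ ℝ. Then the survival function R(t) = P(X ≥ t) satisfies R(t) = { [1+(1-δt)²]·exp(-(t/β)^α) - (2δβ/α)·[Γ(1/α,(t/β)^α) - δβ·Γ(2/α,(t/β)^α)] } / { 2 + δ²β²Γ(1+2/α) - 2δβΓ(1+1/α) } for all t ≥ 0. -/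
open Real MeasureTheory Set Filter

/-- Upper incomplete gamma function. -/
noncomputable def uGamma (a x : ℝ) : ℝ := ∫ u in Set.Ioi x, u^(a-1) * Real.exp (-u)

/-! Substituting `u = (x / β) ^ α` turns `∫ x in Ioi t, (α / β) (x / β) ^ r exp (-(x / β) ^ α)` into
the upper incomplete gamma integral `Γ((r + 1) / α, s)` with `s = (t / β) ^ α`. Expanding
`1 + (1 - δ x) ^ 2 = 2 - 2 δ x + δ ^ 2 x ^ 2` writes the survival integral as
`2 Γ(1, s) - 2 δ β Γ(1 + 1/α, s) + δ ^ 2 β ^ 2 Γ(1 + 2/α, s)`, and the recurrence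
`Γ(a + 1, s) = s ^ a exp (-s) + a Γ(a, s)`, together with `s ^ (1/α) = t / β`, brings this to the
stated form. -/

open Topology

lemma rpow_rpow_div {s α : ℝ} (c : ℝ) (hα : α ≠ 0) (hs : 0 ≤ s) : (s ^ α) ^ (c / α) = s ^ c := by
  rw [← rpow_mul hs, mul_div_cancel₀ _ hα]

section IncompleteGamma

variable {a x : ℝ}

lemma integrableOn_uGamma_integrand (ha : 0 < a) (hx : 0 ≤ x) :
    IntegrableOn (fun u : ℝ => u ^ (a - 1) * exp (-u)) (Ioi x) := by
  refine IntegrableOn.mono_set ?_ (Ioi_subset_Ioi hx)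
  simpa only [mul_comm] using GammaIntegral_convergent ha

lemma uGamma_one (x : ℝ) : uGamma 1 x = exp (-x) := by
  simp only [uGamma, sub_self, rpow_zero, one_mul]
  exact integral_exp_neg_Ioi x

lemma uGamma_add_one (ha : 0 < a) (hx : 0 ≤ x) :
    uGamma (a + 1) x = x ^ a * exp (-x) + a * uGamma a x := by
  have hderiv : ∀ u ∈ Ioi x, HasDerivAt (fun u : ℝ => -(u ^ a * exp (-u)))
      (u ^ (a + 1 - 1) * exp (-u) - a * (u ^ (a - 1) * exp (-u))) u := by
    intro u hu
    have hu0 : u ≠ 0 := (hx.trans_lt hu).ne'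
    refine (((hasDerivAt_rpow_const (p := a) (Or.inl hu0)).mul
      (hasDerivAt_neg u).exp).neg).congr_deriv ?_
    rw [add_sub_cancel_right]
    ring
  have hcont : ContinuousWithinAt (fun u : ℝ => -(u ^ a * exp (-u))) (Ici x) x :=
    ((continuousAt_rpow_const x a (Or.inr ha.le)).mul
      (continuous_exp.comp continuous_neg).continuousAt).neg.continuousWithinAt
  have hlim : Tendsto (fun u : ℝ => -(u ^ a * exp (-u))) atTop (𝓝 0) := by
    simpa using (tendsto_rpow_mul_exp_neg_mul_atTop_nhds_zero a 1 one_pos).neg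
  have hint := integrableOn_uGamma_integrand (add_pos ha one_pos) hx
  have hint' := (integrableOn_uGamma_integrand ha hx).const_mul a
  have hftc := integral_Ioi_of_hasDerivAt_of_tendsto hcont hderiv (hint.sub hint') hlim
  rw [integral_sub hint hint', integral_const_mul] at hftc
  rw [uGamma, uGamma]
  linarith

end IncompleteGamma

section WeibullSubstitution

variable {α β t : ℝ}

lemma hasDerivAt_div_rpow (α : ℝ) {x : ℝ} (hβ : 0 < β) (hx : 0 < x) :
    HasDerivAt (fun x : ℝ => (x / β) ^ α) (α / β * (x / β) ^ (α - 1)) x := by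
  refine ((hasDerivAt_rpow_const (Or.inl (div_pos hx hβ).ne')).comp x
    ((hasDerivAt_id x).div_const β)).congr_deriv ?_
  ring

lemma strictMonoOn_div_rpow (hα : 0 < α) (hβ : 0 < β) :
    StrictMonoOn (fun x : ℝ => (x / β) ^ α) (Ici 0) := fun _ hx _ _ hxy =>
  rpow_lt_rpow (div_nonneg hx hβ.le) (div_lt_div_of_pos_right hxy hβ) hα

lemma image_Ioi_div_rpow (hα : 0 < α) (hβ : 0 < β) (ht : 0 ≤ t) :
    (fun x : ℝ => (x / β) ^ α) '' Ioi t = Ioi ((t / β) ^ α) :=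
  ((continuous_rpow_const hα.le).comp (continuous_id.div_const β)).continuousOn
    |>.image_Ioi_of_strictMonoOn ((strictMonoOn_div_rpow hα hβ).mono (Ici_subset_Ici.mpr ht))
      ((tendsto_rpow_atTop hα).comp (tendsto_id.atTop_div_const hβ))

lemma injOn_div_rpow_Ioi (hα : 0 < α) (hβ : 0 < β) (ht : 0 ≤ t) :
    InjOn (fun x : ℝ => (x / β) ^ α) (Ioi t) :=
  (strictMonoOn_div_rpow hα hβ).injOn.mono (Ioi_subset_Ici ht)

lemma abs_deriv_div_rpow_smul (g : ℝ → ℝ) (hα : 0 < α) (hβ : 0 < β) (ht : 0 ≤ t) :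
    EqOn (fun x => |α / β * (x / β) ^ (α - 1)| • g ((x / β) ^ α))
      (fun x => α / β * (x / β) ^ (α - 1) * g ((x / β) ^ α)) (Ioi t) := fun x hx => by
  have hx0 : 0 < x := ht.trans_lt hx
  simp only [smul_eq_mul, abs_of_nonneg (by positivity : 0 ≤ α / β * (x / β) ^ (α - 1))]

lemma integral_Ioi_comp_div_rpow (g : ℝ → ℝ) (hα : 0 < α) (hβ : 0 < β) (ht : 0 ≤ t) :
    ∫ x in Ioi t, α / β * (x / β) ^ (α - 1) * g ((x / β) ^ α) = ∫ u in Ioi ((t / β) ^ α), g u := by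
  rw [← image_Ioi_div_rpow hα hβ ht, integral_image_eq_integral_abs_deriv_smul measurableSet_Ioi
    (fun x hx => (hasDerivAt_div_rpow α hβ (ht.trans_lt hx)).hasDerivWithinAt)
    (injOn_div_rpow_Ioi hα hβ ht)]
  exact (setIntegral_congr_fun measurableSet_Ioi (abs_deriv_div_rpow_smul g hα hβ ht)).symm

lemma integrableOn_Ioi_comp_div_rpow_iff (g : ℝ → ℝ) (hα : 0 < α) (hβ : 0 < β) (ht : 0 ≤ t) :
    IntegrableOn (fun x => α / β * (x / β) ^ (α - 1) * g ((x / β) ^ α)) (Ioi t) ↔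
      IntegrableOn g (Ioi ((t / β) ^ α)) := by
  rw [← image_Ioi_div_rpow hα hβ ht, integrableOn_image_iff_integrableOn_abs_deriv_smul
    measurableSet_Ioi (fun x hx => (hasDerivAt_div_rpow α hβ (ht.trans_lt hx)).hasDerivWithinAt)
    (injOn_div_rpow_Ioi hα hβ ht)]
  exact integrableOn_congr_fun (abs_deriv_div_rpow_smul g hα hβ ht).symm measurableSet_Ioi

end WeibullSubstitution

noncomputable def weibullKernel (α β r x : ℝ) : ℝ := α / β * (x / β) ^ r * exp (-(x / β) ^ α)

section WeibullKernel

variable {α β t : ℝ}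

lemma weibullKernel_eq (r : ℝ) (hα : 0 < α) (hβ : 0 < β) {x : ℝ} (hx : 0 < x) :
    weibullKernel α β r x =
      α / β * (x / β) ^ (α - 1) * (((x / β) ^ α) ^ ((r + 1) / α - 1) * exp (-(x / β) ^ α)) := by
  have hxβ : 0 < x / β := div_pos hx hβ
  have hpow : (x / β) ^ (α - 1) * ((x / β) ^ α) ^ ((r + 1) / α - 1) = (x / β) ^ r := by
    rw [← rpow_mul hxβ.le, ← rpow_add hxβ]
    congr 1
    field_simp
    ring
  rw [weibullKernel, ← hpow]
  ring

lemma integral_weibullKernel (r : ℝ) (hα : 0 < α) (hβ : 0 < β) (ht : 0 ≤ t) :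
    ∫ x in Ioi t, weibullKernel α β r x = uGamma ((r + 1) / α) ((t / β) ^ α) := by
  rw [uGamma, ← integral_Ioi_comp_div_rpow _ hα hβ ht]
  exact setIntegral_congr_fun measurableSet_Ioi fun x hx =>
    weibullKernel_eq r hα hβ (ht.trans_lt hx)

lemma integrableOn_weibullKernel {r : ℝ} (hr : -1 < r) (hα : 0 < α) (hβ : 0 < β) (ht : 0 ≤ t) :
    IntegrableOn (weibullKernel α β r) (Ioi t) := by
  have hΓ := integrableOn_uGamma_integrand (div_pos (neg_lt_iff_pos_add.mp hr) hα)
    (rpow_nonneg (div_nonneg ht hβ.le) α)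
  rw [← integrableOn_Ioi_comp_div_rpow_iff _ hα hβ ht] at hΓ
  exact hΓ.congr_fun (fun x hx => (weibullKernel_eq r hα hβ (ht.trans_lt hx)).symm)
    measurableSet_Ioi

end WeibullKernel

section SurvivalFunction

variable {α β t : ℝ}

lemma one_add_sq_mul_weibullKernel (δ : ℝ) (hβ : 0 < β) {x : ℝ} (hx : 0 < x) :
    (1 + (1 - δ * x) ^ 2) * weibullKernel α β (α - 1) x =
      2 * weibullKernel α β (α - 1) x - 2 * δ * β * weibullKernel α β α x
        + δ ^ 2 * β ^ 2 * weibullKernel α β (α + 1) x := by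
  have hxβ : 0 < x / β := div_pos hx hβ
  have h1 : (x / β) ^ α = x / β * (x / β) ^ (α - 1) := by
    simpa using rpow_add hxβ 1 (α - 1)
  have h2 : (x / β) ^ (α + 1) = x / β * (x / β) ^ α := by
    rw [rpow_add_one hxβ.ne', mul_comm]
  simp only [weibullKernel]
  rw [h2, h1]
  field_simp
  ring

lemma integral_one_add_sq_mul_weibullKernel (δ : ℝ) (hα : 0 < α) (hβ : 0 < β) (ht : 0 ≤ t) :
    ∫ x in Ioi t, (1 + (1 - δ * x) ^ 2) * weibullKernel α β (α - 1) x
      = (1 + (1 - δ * t) ^ 2) * exp (-(t / β) ^ α)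
        - (2 * δ * β / α)
          * (uGamma (1 / α) ((t / β) ^ α) - δ * β * uGamma (2 / α) ((t / β) ^ α)) := by
  have hK₀ := integrableOn_weibullKernel (r := α - 1) (by linarith) hα hβ ht
  have hK₁ := integrableOn_weibullKernel (r := α) (by linarith) hα hβ ht
  have hK₂ := integrableOn_weibullKernel (r := α + 1) (by linarith) hα hβ ht
  have htβ : 0 ≤ t / β := div_nonneg ht hβ.le
  have hs : 0 ≤ (t / β) ^ α := rpow_nonneg htβ α
  rw [setIntegral_congr_fun measurableSet_Ioi fun x hx =>
      one_add_sq_mul_weibullKernel δ hβ (ht.trans_lt hx),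
    integral_add
      (f := fun x => 2 * weibullKernel α β (α - 1) x - 2 * δ * β * weibullKernel α β α x)
      ((hK₀.const_mul _).sub (hK₁.const_mul _)) (hK₂.const_mul _),
    integral_sub (hK₀.const_mul _) (hK₁.const_mul _),
    integral_const_mul, integral_const_mul, integral_const_mul,
    integral_weibullKernel _ hα hβ ht, integral_weibullKernel _ hα hβ ht,
    integral_weibullKernel _ hα hβ ht,
    show (α - 1 + 1) / α = 1 by field_simp; ring,
    show (α + 1) / α = 1 / α + 1 by field_simp; ring,
    show (α + 1 + 1) / α = 2 / α + 1 by field_simp; ring,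
    uGamma_one, uGamma_add_one (by positivity) hs, uGamma_add_one (by positivity) hs,
    rpow_rpow_div 1 hα.ne' htβ, rpow_rpow_div 2 hα.ne' htβ, rpow_one, rpow_two]
  field_simp
  ring

end SurvivalFunction

theorem stmt_8 (α β δ : ℝ) (hα : 0 < α) (hβ : 0 < β) (t : ℝ) (ht : 0 ≤ t) :
    (∫ x in Set.Ioi t, bwPdf α β δ x)
      = ((1+(1-δ*t)^2) * Real.exp (-(t/β)^α)
          - (2*δ*β/α) * (uGamma (1/α) ((t/β)^α) - δ*β * uGamma (2/α) ((t/β)^α)))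
        / (2 + δ^2*β^2*Real.Gamma (1+2/α) - 2*δ*β*Real.Gamma (1+1/α)) := by
  have hpdf : bwPdf α β δ = fun x => (1 + (1 - δ * x) ^ 2) * weibullKernel α β (α - 1) x
      / (2 + δ^2*β^2*Real.Gamma (1+2/α) - 2*δ*β*Real.Gamma (1+1/α)) := by
    ext x
    simp only [bwPdf, weibullKernel, div_eq_mul_inv, mul_inv]
    ring
  rw [hpdf, integral_div, integral_one_add_sq_mul_weibullKernel δ hα hβ ht]
end

section
/- Let H(t) = f(t)/R(t) be the hazard rate of the bimodal Weibull distribution, where f is its density and R its survival function. Then lim_{t→0⁺} H(t) = 0 if α > 1, equals 1/(β(1 - δβ + δ²β²)) if α = 1, and equals +∞ if α < 1. -/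
open Real MeasureTheory Set Filter

/-! The density factors as `f t = g t * (t / β) ^ (α - 1)` with `g` continuous and
`g 0 = 2α / (βZ)`, while `R t → ∫₀^∞ f = 1` as `t → 0⁺`; hence `H t` behaves like
`2α / (βZ) * (t / β) ^ (α - 1)`, which tends to `0`, `2 / (βZ)` or `∞` according as
`α > 1`, `α = 1` or `α < 1`. The normalisation comes from
`∫₀^∞ (x/β)^q exp (-(x/β)^α) dx = (β/α) Γ((q+1)/α)` applied to
`1 + (1 - δx)² = 2 - 2δx + δ²x²`, and `Z > 0` because log-convexity of `Γ` gives `Γ(1 + 1/α)² ≤ Γ(1 + 2/α)`, so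
`Z ≥ 1 + (1 - δβ Γ(1 + 1/α))²`. -/

open Topology

theorem Real.Gamma_midpoint_sq_le {x y : ℝ} (hx : 0 < x) (hy : 0 < y) :
    Gamma ((x + y) / 2) ^ 2 ≤ Gamma x * Gamma y := by
  have h := Gamma_mul_add_mul_le_rpow_Gamma_mul_rpow_Gamma hx hy (a := 1 / 2) (b := 1 / 2)
    (by norm_num) (by norm_num) (by norm_num)
  rw [show 1 / 2 * x + 1 / 2 * y = (x + y) / 2 by ring, ← sqrt_eq_rpow, ← sqrt_eq_rpow,
    ← sqrt_mul (Gamma_pos_of_pos hx).le] at h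
  have hmid : 0 ≤ Gamma ((x + y) / 2) := (Gamma_pos_of_pos (by positivity)).le
  calc Gamma ((x + y) / 2) ^ 2 ≤ √(Gamma x * Gamma y) ^ 2 := by gcongr
    _ = Gamma x * Gamma y := sq_sqrt (by positivity [Gamma_pos_of_pos hx, Gamma_pos_of_pos hy])

theorem integrableOn_div_rpow_mul_exp_neg_div_rpow {p q b : ℝ} (hp : 0 < p) (hq : -1 < q)
    (hb : 0 < b) : IntegrableOn (fun x ↦ (x / b) ^ q * exp (-(x / b) ^ p)) (Ioi 0) := by
  have h := (integrableOn_Ioi_comp_mul_right_iff (fun x ↦ x ^ q * exp (-x ^ p)) 0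
    (inv_pos.mpr hb)).mpr (by simpa using integrableOn_rpow_mul_exp_neg_rpow hq hp)
  simpa [div_eq_mul_inv] using h

theorem integral_div_rpow_mul_exp_neg_div_rpow {p q b : ℝ} (hp : 0 < p) (hq : -1 < q)
    (hb : 0 < b) :
    ∫ x in Ioi 0, (x / b) ^ q * exp (-(x / b) ^ p) = b / p * Gamma ((q + 1) / p) := by
  have h := integral_comp_mul_right_Ioi (fun x ↦ x ^ q * exp (-x ^ p)) 0 (inv_pos.mpr hb)
  simp only [zero_mul, integral_rpow_mul_exp_neg_rpow hp hq, inv_inv, smul_eq_mul] at h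
  simp only [div_eq_mul_inv, h]
  ring

theorem tendsto_integral_Ioi_nhdsGT {E : Type*} [NormedAddCommGroup E] [NormedSpace ℝ E]
    {f : ℝ → E} {a : ℝ} (hf : IntegrableOn f (Ioi a)) :
    Tendsto (fun t ↦ ∫ x in Ioi t, f x) (𝓝[>] a) (𝓝 (∫ x in Ioi a, f x)) := by
  have hprim : Tendsto (fun t ↦ ∫ x in a..t, f x) (𝓝[>] a) (𝓝 0) := by
    have h := intervalIntegral.continuousWithinAt_primitive (μ := volume) (f := f) (a := a)
      (b₀ := a) (b₁ := a) (b₂ := a + 1) Real.volume_singleton ?_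
    · rw [ContinuousWithinAt, intervalIntegral.integral_same] at h
      exact h.mono_left (nhdsWithin_le_of_mem (Icc_mem_nhdsGT (by linarith)))
    · simp only [min_self, le_add_iff_nonneg_right, zero_le_one, max_eq_right]
      exact (intervalIntegrable_iff_integrableOn_Ioc_of_le (by linarith)).mpr
        (hf.mono_set Ioc_subset_Ioi_self)
  have h := (tendsto_const_nhds (x := ∫ x in Ioi a, f x)).sub hprim
  rw [sub_zero] at h
  refine h.congr' (eventually_mem_nhdsWithin.mono fun t ht ↦ ?_)
  rw [← intervalIntegral.integral_Ioi_sub_Ioi hf (le_of_lt ht), sub_sub_cancel]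

theorem tendsto_div_rpow_nhdsGT_zero_of_neg {b r : ℝ} (hb : 0 < b) (hr : r < 0) :
    Tendsto (fun t ↦ (t / b) ^ r) (𝓝[>] 0) atTop := by
  refine ((tendsto_rpow_neg_nhdsGT_zero hr).atTop_div_const (rpow_pos_of_pos hb r)).congr'
    (eventually_mem_nhdsWithin.mono fun t ht ↦ ?_)
  exact (div_rpow (le_of_lt ht) hb.le r).symm

noncomputable def bwZ (α β δ : ℝ) : ℝ :=
  2 + δ^2*β^2*Gamma (1+2/α) - 2*δ*β*Gamma (1+1/α)

noncomputable def bwSurvival (α β δ t : ℝ) : ℝ :=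
  ∫ x in Ioi t, bwPdf α β δ x

noncomputable def bwRegularPart (α β δ t : ℝ) : ℝ :=
  α / (β * bwZ α β δ) * (1 + (1 - δ * t) ^ 2) * exp (-(t / β) ^ α)

theorem bwZ_pos {α : ℝ} (hα : 0 < α) (β δ : ℝ) : 0 < bwZ α β δ := by
  have hΓ : Gamma (1 + 1/α) ^ 2 ≤ Gamma (1 + 2/α) := by
    simpa [Gamma_one, show (1 + (1 + 2/α)) / 2 = 1 + 1/α by ring] using
      Gamma_midpoint_sq_le one_pos (show 0 < 1 + 2/α by positivity)
  have := mul_le_mul_of_nonneg_left hΓ (sq_nonneg (δ * β))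
  unfold bwZ
  nlinarith [sq_nonneg (1 - δ * β * Gamma (1 + 1/α))]

theorem bwZ_one (β δ : ℝ) : bwZ 1 β δ = 2 * (1 - δ * β + δ^2 * β^2) := by
  have hΓ3 : Gamma 3 = 2 := by
    rw [show (3 : ℝ) = 2 + 1 by norm_num, Gamma_add_one two_ne_zero, Gamma_two, mul_one]
  norm_num [bwZ, hΓ3]
  ring

theorem bwPdf_eq_regularPart_mul_rpow (α β δ t : ℝ) :
    bwPdf α β δ t = bwRegularPart α β δ t * (t / β) ^ (α - 1) := by
  unfold bwPdf bwRegularPart bwZ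
  ring

theorem bwPdf_eq_of_ne_zero {α β x : ℝ} (δ : ℝ) (hβ : β ≠ 0) (hx : x ≠ 0) :
    bwPdf α β δ x = α / (β * bwZ α β δ) *
      (2 * ((x / β) ^ (α - 1) * exp (-(x / β) ^ α))
        - 2 * δ * β * ((x / β) ^ α * exp (-(x / β) ^ α))
        + δ ^ 2 * β ^ 2 * ((x / β) ^ (α + 1) * exp (-(x / β) ^ α))) := by
  have hu : x / β ≠ 0 := div_ne_zero hx hβ
  have h1 : (x / β) ^ α = (x / β) ^ (α - 1) * (x / β) := by
    rw [← rpow_add_one hu, sub_add_cancel]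
  have h2 : (x / β) ^ (α + 1) = (x / β) ^ (α - 1) * (x / β) ^ 2 := by
    rw [← rpow_add_natCast hu]; norm_num; ring_nf
  have hpoly :
      1 + (1 - δ * x) ^ 2 = 2 - 2 * δ * β * (x / β) + δ ^ 2 * β ^ 2 * (x / β) ^ 2 := by
    field_simp; ring
  rw [bwPdf, ← bwZ, hpoly]
  linear_combination (α / (β * bwZ α β δ) * exp (-(x / β) ^ α)) *
    (2 * δ * β * h1 - δ ^ 2 * β ^ 2 * h2)

theorem integrableOn_bwPdf {α β : ℝ} (hα : 0 < α) (hβ : 0 < β) (δ : ℝ) :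
    IntegrableOn (bwPdf α β δ) (Ioi 0) := by
  have hw (q : ℝ) (hq : -1 < q) := integrableOn_div_rpow_mul_exp_neg_div_rpow hα hq hβ
  refine IntegrableOn.congr_fun ?_
    (fun x hx ↦ (bwPdf_eq_of_ne_zero δ hβ.ne' (ne_of_gt hx)).symm) measurableSet_Ioi
  exact ((((hw _ (by linarith)).const_mul 2).sub ((hw α (by linarith)).const_mul _)).add
    ((hw _ (by linarith)).const_mul _)).const_mul _

theorem integral_bwPdf {α β : ℝ} (hα : 0 < α) (hβ : 0 < β) (δ : ℝ) :
    ∫ x in Ioi 0, bwPdf α β δ x = 1 := by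
  have hw (q : ℝ) (hq : -1 < q) := integrableOn_div_rpow_mul_exp_neg_div_rpow hα hq hβ
  have hw₀ := hw (α - 1) (by linarith)
  have hw₁ := hw α (by linarith)
  have hw₂ := hw (α + 1) (by linarith)
  rw [setIntegral_congr_fun measurableSet_Ioi
      (fun x hx ↦ bwPdf_eq_of_ne_zero δ hβ.ne' (ne_of_gt hx)),
    integral_const_mul, integral_add ?_ (hw₂.const_mul _),
    integral_sub (hw₀.const_mul _) (hw₁.const_mul _), integral_const_mul, integral_const_mul,
    integral_const_mul, integral_div_rpow_mul_exp_neg_div_rpow hα (by linarith) hβ,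
    integral_div_rpow_mul_exp_neg_div_rpow hα (by linarith) hβ,
    integral_div_rpow_mul_exp_neg_div_rpow hα (by linarith) hβ, sub_add_cancel, div_self hα.ne',
    Gamma_one, show (α + 1) / α = 1 + 1 / α by field_simp,
    show (α + 1 + 1) / α = 1 + 2 / α by field_simp; ring]
  · rw [div_mul_eq_mul_div, div_eq_one_iff_eq (mul_pos hβ (bwZ_pos hα β δ)).ne', bwZ]
    generalize Gamma (1 + 1 / α) = Γ₁
    generalize Gamma (1 + 2 / α) = Γ₂
    field_simp
    ring
  · exact (hw₀.const_mul _).sub (hw₁.const_mul _)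

theorem tendsto_bwSurvival_nhdsGT_zero {α β : ℝ} (hα : 0 < α) (hβ : 0 < β) (δ : ℝ) :
    Tendsto (bwSurvival α β δ) (𝓝[>] 0) (𝓝 1) := by
  show Tendsto (fun t ↦ ∫ x in Ioi t, bwPdf α β δ x) _ _
  simpa only [integral_bwPdf hα hβ δ] using
    tendsto_integral_Ioi_nhdsGT (integrableOn_bwPdf hα hβ δ)

theorem tendsto_bwRegularPart {α : ℝ} (hα : 0 < α) (β δ : ℝ) :
    Tendsto (bwRegularPart α β δ) (𝓝 0) (𝓝 (2 * α / (β * bwZ α β δ))) := by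
  have hcont : ContinuousAt (bwRegularPart α β δ) 0 := by
    unfold bwRegularPart
    fun_prop (disch := exact Or.inr hα.le)
  convert hcont.tendsto using 2
  simp [bwRegularPart, zero_rpow hα.ne']
  ring

theorem stmt_16 (α β δ : ℝ) (hα : 0 < α) (hβ : 0 < β) :
    (1 < α → Filter.Tendsto
        (fun t => bwPdf α β δ t / ∫ x in Set.Ioi t, bwPdf α β δ x)
        (nhdsWithin 0 (Set.Ioi 0)) (nhds 0)) ∧
    (α = 1 → Filter.Tendsto
        (fun t => bwPdf α β δ t / ∫ x in Set.Ioi t, bwPdf α β δ x)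
        (nhdsWithin 0 (Set.Ioi 0)) (nhds (1 / (β * (1 - δ*β + δ^2*β^2))))) ∧
    (α < 1 → Filter.Tendsto
        (fun t => bwPdf α β δ t / ∫ x in Set.Ioi t, bwPdf α β δ x)
        (nhdsWithin 0 (Set.Ioi 0)) Filter.atTop) := by
  have hZ := bwZ_pos hα β δ
  have hcofactor : Tendsto (fun t ↦ bwRegularPart α β δ t / bwSurvival α β δ t) (𝓝[>] 0)
      (𝓝 (2 * α / (β * bwZ α β δ))) := by
    have h := ((tendsto_bwRegularPart hα β δ).mono_left nhdsWithin_le_nhds).div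
      (tendsto_bwSurvival_nhdsGT_zero hα hβ δ) one_ne_zero
    rwa [div_one] at h
  have hhazard : (fun t ↦ bwPdf α β δ t / ∫ x in Ioi t, bwPdf α β δ x) =
      fun t ↦ bwRegularPart α β δ t / bwSurvival α β δ t * (t / β) ^ (α - 1) :=
    funext fun t ↦ by rw [bwPdf_eq_regularPart_mul_rpow, mul_div_right_comm]; rfl
  rw [hhazard]
  refine ⟨fun hα₁ ↦ ?_, fun hα₁ ↦ ?_, fun hα₁ ↦ ?_⟩
  · have hpow : Tendsto (fun t ↦ (t / β) ^ (α - 1)) (𝓝 0) (𝓝 0) := by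
      have h := ((continuous_id.div_const β).tendsto 0).rpow_const (Or.inr (sub_pos.mpr hα₁).le)
      simpa [zero_rpow (sub_pos.mpr hα₁).ne'] using h
    simpa using hcofactor.mul (hpow.mono_left nhdsWithin_le_nhds)
  · subst hα₁
    simp only [sub_self, rpow_zero, mul_one]
    convert hcofactor using 2
    rw [bwZ_one]
    field_simp
  · exact hcofactor.pos_mul_atTop (by positivity)
      (tendsto_div_rpow_nhdsGT_zero_of_neg hβ (by linarith))
end

section
/- Let X have the bimodal Weibull density with α = 2, and let x > 0 be a critical point of the density. Then x is a root of the quartic 2δ²x⁴ - 4δx³ + (4 - 3β²δ²)x² + 4β²δx - 2β² = 0. Moreover, if δ > 0 and β²δ² ≤ 4/3, this quartic has exactly one negative root, and its number of positive roots is one or three. -/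
/-!
For `α = 2` the density is a nonzero constant times `(1 + (1 - δx)²) (x/β) exp(-(x/β)²)`
(the normalizing factor is `2 + t² - t√π` with `t = δβ`, positive because `π < 8`), and the
derivative of that kernel is `-Q(x) exp(-(x/β)²) / β³`, where `Q` is the quartic.

For the roots, put `s = β²δ² ≤ 4/3`. Then `Q(0) = -2β² < 0` while `δ² Q(3/δ) = 90 - 17s` and
`δ² Q(-2/δ) = 80 - 22s` are positive, so `Q` has a root on each half-line. Conversely
`δ² (x Q(y) - y Q(x)) = (y - x) S(δx, δy)` with `S > 0` whenever `xy > 0`, i.e. `t ↦ Q(t)/t` is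
strictly increasing on each half-line, so each of them carries exactly one root.
-/

open Real MeasureTheory Set Filter

noncomputable def bwQuartic (β δ x : ℝ) : ℝ :=
  2*δ^2*x^4 - 4*δ*x^3 + (4 - 3*β^2*δ^2)*x^2 + 4*β^2*δ*x - 2*β^2

def bwSecant (s a c : ℝ) : ℝ :=
  2*a*c*(a^2+a*c+c^2) - 4*a*c*(a+c) + (4-3*s)*a*c + 2*s

lemma mul_sub_mul_bwQuartic (β δ x y : ℝ) :
    δ^2 * (x * bwQuartic β δ y - y * bwQuartic β δ x) =
      (y - x) * bwSecant (β^2*δ^2) (δ*x) (δ*y) := by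
  unfold bwQuartic bwSecant; ring

lemma bwSecant_pos_of_pos {s a c : ℝ} (hs₀ : 0 ≤ s) (hs : s ≤ 4/3) (ha : 0 < a) (hc : 0 < c) :
    0 < bwSecant s a c := by
  unfold bwSecant
  rcases le_or_gt (3*(a*c)) 2 with h | h
  · nlinarith [mul_pos ha hc, sq_nonneg (3*(a+c)-4), sq_nonneg (a-c),
      mul_nonneg (mul_pos ha hc).le hs₀]
  · nlinarith [mul_pos ha hc, sq_nonneg (a-c), sq_nonneg (a+c-2), sq_nonneg (a*c-1),
      mul_pos (mul_pos ha hc) (mul_pos ha hc), sq_nonneg (a*c*(a+c)-2),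
      mul_nonneg (mul_pos ha hc).le (sq_nonneg (a+c-2)),
      mul_nonneg (mul_pos ha hc).le (sq_nonneg (a-c))]

lemma bwSecant_pos {s a c : ℝ} (hs₀ : 0 ≤ s) (hs : s ≤ 4/3) (hac : 0 < a * c) :
    0 < bwSecant s a c := by
  rcases pos_and_pos_or_neg_and_neg_of_mul_pos hac with ⟨ha, hc⟩ | ⟨ha, hc⟩
  · exact bwSecant_pos_of_pos hs₀ hs ha hc
  · -- flipping both signs only changes the term `-4ac(a + c)`, which is positive here
    have := bwSecant_pos_of_pos hs₀ hs (neg_pos.2 ha) (neg_pos.2 hc)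
    unfold bwSecant at this ⊢
    nlinarith [mul_pos hac (neg_pos.2 (add_neg ha hc))]

section Quartic

variable {β δ : ℝ}

lemma bwQuartic_eq_of_mul_pos (hδ : δ ≠ 0) (hs : β^2*δ^2 ≤ 4/3) {x y : ℝ} (hxy : 0 < x * y)
    (hx : bwQuartic β δ x = 0) (hy : bwQuartic β δ y = 0) : x = y := by
  have hδxy : 0 < (δ * x) * (δ * y) := by
    rw [mul_mul_mul_comm]; exact mul_pos (mul_self_pos.2 hδ) hxy
  have hS := bwSecant_pos (by positivity) hs hδxy
  have hdiff := mul_sub_mul_bwQuartic β δ x y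
  rw [hx, hy, mul_zero, mul_zero, sub_zero, mul_zero, eq_comm, mul_eq_zero] at hdiff
  exact (sub_eq_zero.1 (hdiff.resolve_right hS.ne')).symm

lemma continuous_bwQuartic : Continuous (bwQuartic β δ) := by
  unfold bwQuartic; fun_prop

lemma bwQuartic_zero_neg (hβ : β ≠ 0) : bwQuartic β δ 0 < 0 := by
  simp [bwQuartic]; positivity

lemma exists_bwQuartic_root_pos (hβ : β ≠ 0) (hδ : 0 < δ) (hs : β^2*δ^2 ≤ 4/3) :
    ∃ x, 0 < x ∧ bwQuartic β δ x = 0 := by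
  have hM : 0 < bwQuartic β δ (3/δ) := by
    have : bwQuartic β δ (3/δ) = (90 - 17*(β^2*δ^2)) / δ^2 := by
      unfold bwQuartic; field_simp; ring
    rw [this]; apply div_pos <;> nlinarith [sq_pos_of_pos hδ]
  obtain ⟨x, hx, hx0⟩ := intermediate_value_Ioo (by positivity)
    continuous_bwQuartic.continuousOn ⟨bwQuartic_zero_neg hβ, hM⟩
  exact ⟨x, hx.1, hx0⟩

lemma exists_bwQuartic_root_neg (hβ : β ≠ 0) (hδ : 0 < δ) (hs : β^2*δ^2 ≤ 4/3) :
    ∃ x, x < 0 ∧ bwQuartic β δ x = 0 := by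
  have hM : 0 < bwQuartic β δ (-(2/δ)) := by
    have : bwQuartic β δ (-(2/δ)) = (80 - 22*(β^2*δ^2)) / δ^2 := by
      unfold bwQuartic; field_simp; ring
    rw [this]; apply div_pos <;> nlinarith [sq_pos_of_pos hδ]
  obtain ⟨x, hx, hx0⟩ := intermediate_value_Ioo' (neg_nonpos.2 (by positivity))
    continuous_bwQuartic.continuousOn ⟨bwQuartic_zero_neg hβ, hM⟩
  exact ⟨x, hx.2, hx0⟩

end Quartic

noncomputable def bwKernel (β δ x : ℝ) : ℝ :=
  (1+(1-δ*x)^2) * (x/β) * exp (-(x/β)^2)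

lemma two_add_sq_sub_mul_sqrt_pi_pos (t : ℝ) : 0 < 2 + t^2 - t * √π := by
  nlinarith [sq_nonneg (2*t - √π), sq_sqrt pi_pos.le, pi_lt_four]

lemma bwPdf_two (β δ : ℝ) : bwPdf 2 β δ = fun x =>
    2 / (β * (2 + (δ*β)^2 - δ*β*√π)) * bwKernel β δ x := by
  have hΓ : Gamma (1 + 1/2) = √π / 2 := by
    rw [add_comm, Gamma_add_one (by norm_num), Gamma_one_half_eq]; ring
  ext x
  rw [bwPdf, bwKernel, hΓ, show (1:ℝ) + 2/2 = 2 by norm_num, Gamma_two,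
    show (2:ℝ) - 1 = 1 by norm_num, rpow_one, rpow_two]
  ring

lemma hasDerivAt_bwKernel {β : ℝ} (hβ : β ≠ 0) (δ x : ℝ) :
    HasDerivAt (bwKernel β δ) (-bwQuartic β δ x / β^3 * exp (-(x/β)^2)) x := by
  have hlin : HasDerivAt (fun t => t/β) (1/β) x := (hasDerivAt_id' x).div_const β
  refine (((((hasDerivAt_id' x).const_mul δ).const_sub 1).fun_pow 2).const_add 1).fun_mul hlin
    |>.fun_mul (hlin.fun_pow 2).fun_neg.exp |>.congr_deriv ?_
  simp only [bwQuartic, Nat.cast_ofNat, Nat.add_one_sub_one, pow_one]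
  field_simp
  ring

lemma bwQuartic_eq_zero_of_deriv_bwPdf_two {β δ x : ℝ} (hβ : β ≠ 0)
    (h : deriv (bwPdf 2 β δ) x = 0) : bwQuartic β δ x = 0 := by
  rw [bwPdf_two, ((hasDerivAt_bwKernel hβ δ x).const_mul _).deriv] at h
  have := (two_add_sq_sub_mul_sqrt_pi_pos (δ*β)).ne'
  simpa [hβ, this, exp_ne_zero] using h

lemma Set.encard_eq_one_of_existsUnique {α : Type*} {p : α → Prop} (h : ∃! x, p x) :
    {x | p x}.encard = 1 := by
  obtain ⟨x, hx, huniq⟩ := h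
  exact encard_eq_one.2 ⟨x, eq_singleton_iff_unique_mem.2 ⟨hx, huniq⟩⟩

theorem stmt_18 (β δ : ℝ) (hβ : 0 < β) :
    (∀ x : ℝ, 0 < x → deriv (bwPdf 2 β δ) x = 0 →
        2*δ^2*x^4 - 4*δ*x^3 + (4 - 3*β^2*δ^2)*x^2 + 4*β^2*δ*x - 2*β^2 = 0) ∧
    (0 < δ → β^2*δ^2 ≤ 4/3 →
      {x : ℝ | x < 0 ∧
        2*δ^2*x^4 - 4*δ*x^3 + (4 - 3*β^2*δ^2)*x^2 + 4*β^2*δ*x - 2*β^2 = 0}.encard = 1 ∧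
      ({x : ℝ | 0 < x ∧
        2*δ^2*x^4 - 4*δ*x^3 + (4 - 3*β^2*δ^2)*x^2 + 4*β^2*δ*x - 2*β^2 = 0}.encard = 1 ∨
       {x : ℝ | 0 < x ∧
        2*δ^2*x^4 - 4*δ*x^3 + (4 - 3*β^2*δ^2)*x^2 + 4*β^2*δ*x - 2*β^2 = 0}.encard = 3)) := by
  refine ⟨fun x _ h => bwQuartic_eq_zero_of_deriv_bwPdf_two hβ.ne' h,
    fun hδ hs => ⟨?_, Or.inl ?_⟩⟩
  · obtain ⟨r, hr, hr0⟩ := exists_bwQuartic_root_neg hβ.ne' hδ hs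
    exact Set.encard_eq_one_of_existsUnique ⟨r, ⟨hr, hr0⟩, fun x ⟨hx, hx0⟩ =>
      bwQuartic_eq_of_mul_pos hδ.ne' hs (mul_pos_of_neg_of_neg hx hr) hx0 hr0⟩
  · obtain ⟨r, hr, hr0⟩ := exists_bwQuartic_root_pos hβ.ne' hδ hs
    exact Set.encard_eq_one_of_existsUnique ⟨r, ⟨hr, hr0⟩, fun x ⟨hx, hx0⟩ =>
      bwQuartic_eq_of_mul_pos hδ.ne' hs (mul_pos hx hr) hx0 hr0⟩
end
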